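/- Suppose each correct process p delivers at most one value d(p), and whenever two correct processes p, q are adjacent in the trust graph G_{F,S} (their quorums intersect outside F) they deliver the same value (d(p) = d(q) when both defined). Then the number of distinct values delivered by correct processes is at most the independence number of G_{F,S}. -/

import Mathlib

/-- The trust graph `G_{F,S}`: vertices are processes not in `F`, with an edge
between distinct `p`, `q` iff their quorums intersect outside `F`. -/
def trustGraph {Proc : Type*} [DecidableEq Proc] (F : Finset Proc) (S : Proc → Finset Proc) :
    SimpleGraph {p : Proc // p ∉ F} where
  Adj p q := p ≠ q ∧ ¬ (S p.1 ∩ S q.1 ⊆ F)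
  symm := ⟨fun p q ⟨h1, h2⟩ => ⟨h1.symm, by rwa [Finset.inter_comm]⟩⟩
  loopless := ⟨fun p ⟨h, _⟩ => h rfl⟩

/-- A set of vertices is independent if no two of its members are adjacent. -/
def IsIndepSet {V : Type*} (G : SimpleGraph V) (I : Set V) : Prop :=
  ∀ p ∈ I, ∀ q ∈ I, ¬ G.Adj p q

/-- The independence number: maximum cardinality of an independent set. -/
noncomputable def indepNum {V : Type*} [Fintype V] (G : SimpleGraph V) : ℕ :=
  sSup {n | ∃ s : Finset V, IsIndepSet G ↑s ∧ s.card = n}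

/-!
Pick one vertex delivering each delivered value. Two of these vertices deliver different
values, so they are not adjacent: the chosen vertices form an independent set with as many
elements as there are delivered values.
-/

section

variable {V M : Type*} {G : SimpleGraph V}

theorem IsIndepSet.card_le_indepNum [Fintype V] {s : Finset V} (hs : IsIndepSet G ↑s) :
    s.card ≤ indepNum G :=
  le_csSup ⟨Fintype.card V, by rintro n ⟨t, -, rfl⟩; exact t.card_le_univ⟩ ⟨s, hs, rfl⟩

theorem isIndepSet_of_injOn {d : V → Option M}
    (hagree : ∀ p q m₁ m₂, G.Adj p q → d p = some m₁ → d q = some m₂ → m₁ = m₂)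
    {I : Set V} (hdef : ∀ p ∈ I, (d p).isSome) (hinj : I.InjOn d) : IsIndepSet G I := by
  intro p hp q hq hadj
  obtain ⟨m₁, hm₁⟩ := Option.isSome_iff_exists.mp (hdef p hp)
  obtain ⟨m₂, hm₂⟩ := Option.isSome_iff_exists.mp (hdef q hq)
  have hpq : d p = d q := by rw [hm₁, hm₂, hagree p q m₁ m₂ hadj hm₁ hm₂]
  exact G.ne_of_adj hadj (hinj hp hq hpq)

theorem ncard_delivered_le_indepNum [Fintype V] (d : V → Option M)
    (hagree : ∀ p q m₁ m₂, G.Adj p q → d p = some m₁ → d q = some m₂ → m₁ = m₂) :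
    {m : M | ∃ p, d p = some m}.ncard ≤ indepNum G := by
  classical
  set D := {m : M | ∃ p, d p = some m}
  choose f hf using fun m : D => m.2
  have hinj : Function.Injective f := fun a b hab =>
    Subtype.ext (Option.some.inj ((hf a).symm.trans (hab ▸ hf b)))
  have : Finite D := Finite.of_injective f hinj
  have : Fintype D := Fintype.ofFinite D
  have hindep : IsIndepSet G ↑(Finset.univ.image f) := by
    rw [Finset.coe_image, Finset.coe_univ, Set.image_univ]
    refine isIndepSet_of_injOn hagree ?_ ?_
    · rintro _ ⟨a, rfl⟩
      simp [hf a]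
    · rintro _ ⟨a, rfl⟩ _ ⟨b, rfl⟩ hab
      rw [hf a, hf b] at hab
      rw [Subtype.ext (Option.some.inj hab)]
  calc D.ncard = (Finset.univ.image f).card := by
        rw [Finset.card_image_of_injective _ hinj, Finset.card_univ, Set.ncard_eq_toFinset_card',
          Set.toFinset_card]
    _ ≤ indepNum G := hindep.card_le_indepNum

end

/-- if correct processes whose quorums intersect outside `F` never deliver
different values, then the number of distinct delivered values is at most the
independence number of the trust graph. -/
theorem stmt2 {Proc : Type*} [Fintype Proc] [DecidableEq Proc] {M : Type*}
    (F : Finset Proc) (S : Proc → Finset Proc) (d : {p : Proc // p ∉ F} → Option M)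
    (hagree : ∀ (p q : {p : Proc // p ∉ F}) (m₁ m₂ : M),
      ¬ (S p.1 ∩ S q.1 ⊆ F) → d p = some m₁ → d q = some m₂ → m₁ = m₂) :
    Set.ncard {m : M | ∃ p, d p = some m} ≤ indepNum (trustGraph F S) :=
  ncard_delivered_le_indepNum d fun p q m₁ m₂ hadj => hagree p q m₁ m₂ hadj.2
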